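/- arXiv:2605.02459 — 2 statements merged into one kernel-verified Lean document; each statement's English description precedes it below -/
import Mathlib

section
/- Let p ∈ ℂ[y] with d := deg p ≥ 2 and let α, β, δ ∈ ℂ with αβ ≠ 0. Set e(x,y) = (α x + p(y), β y + δ). For any ε ∈ (0,1) there exists R₀ ≥ 1 such that for all R ≥ R₀: if ‖(x,y)‖ ≥ R and |y| ≥ ε|x|, then |α x + p(y)| > ε⁻¹ |β y + δ|; in particular e maps V⁺_{R,ε} into the region V⁻ = {(u,v) : |u| > ε⁻¹|v|}. -/
/-!
Since `deg p ≥ 2`, `‖p y‖` eventually dominates every affine function of `‖y‖`: write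
`p = X * divX p + p(0)`, where `‖(divX p)(y)‖ → ∞`. On the sector `y` is large, `‖y‖ ≥ εR`,
and `‖x‖ ≤ ε⁻¹‖y‖`, so `‖αx + p y‖ ≥ ‖p y‖ - ε⁻¹‖α‖‖y‖`, which beats `ε⁻¹(‖β‖‖y‖ + ‖δ‖)`.
-/

open Polynomial Filter Bornology

theorem Polynomial.eventually_mul_norm_add_lt_norm_eval {𝕜 : Type*} [NormedField 𝕜] (p : 𝕜[X])
    (hd : 2 ≤ p.natDegree) (A B : ℝ) : ∀ᶠ y in cobounded 𝕜, A * ‖y‖ + B < ‖p.eval y‖ := by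
  have hdivX : 0 < p.divX.degree := by
    rw [← natDegree_pos_iff_degree_pos, natDegree_divX_eq_natDegree_tsub_one]; omega
  have hdivX_large := p.divX.tendsto_norm_atTop hdivX tendsto_norm_cobounded_atTop
  filter_upwards [hdivX_large.eventually_ge_atTop (|A| + (|B| + ‖p.coeff 0‖ + 1)),
    eventually_cobounded_le_norm 1] with y hq hy
  have hp : ‖y‖ * ‖p.divX.eval y‖ - ‖p.coeff 0‖ ≤ ‖p.eval y‖ := by
    have h := congrArg (eval y) (divX_mul_X_add p)
    rw [eval_add, eval_mul_X, eval_C] at h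
    rw [← h, ← norm_neg (p.coeff 0), mul_comm, ← norm_mul, ← sub_neg_eq_add]
    exact norm_sub_norm_le _ _
  have hyq := mul_le_mul_of_nonneg_left hq (norm_nonneg y)
  have hA : A * ‖y‖ ≤ |A| * ‖y‖ := mul_le_mul_of_nonneg_right (le_abs_self A) (norm_nonneg y)
  have hB : |B| + ‖p.coeff 0‖ + 1 ≤ ‖y‖ * (|B| + ‖p.coeff 0‖ + 1) :=
    le_mul_of_one_le_left (by positivity) hy
  linarith [le_abs_self B]

theorem mul_le_norm_of_le_max_norm {E : Type*} [SeminormedAddCommGroup E] {ε R : ℝ}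
    (hε0 : 0 ≤ ε) (hε1 : ε ≤ 1) {x y : E}
    (hR : R ≤ max ‖x‖ ‖y‖) (hsec : ε * ‖x‖ ≤ ‖y‖) : ε * R ≤ ‖y‖ :=
  calc ε * R ≤ ε * max ‖x‖ ‖y‖ := mul_le_mul_of_nonneg_left hR hε0
    _ = max (ε * ‖x‖) (ε * ‖y‖) := mul_max_of_nonneg _ _ hε0
    _ ≤ ‖y‖ := max_le hsec (mul_le_of_le_one_left (norm_nonneg y) hε1)

theorem elementary_maps_sector_into_complement_general (α β δ : ℂ)
    (p : Polynomial ℂ) (hd : 2 ≤ p.natDegree) (ε : ℝ) (hε0 : 0 < ε) (hε1 : ε < 1) :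
    ∃ R₀ ≥ (1 : ℝ), ∀ R ≥ R₀, ∀ x y : ℂ,
      R ≤ max ‖x‖ ‖y‖ →
      ε * ‖x‖ ≤ ‖y‖ →
      ε⁻¹ * ‖β * y + δ‖ < ‖α * x + p.eval y‖ := by
  obtain ⟨Y, -, hY⟩ := hasBasis_cobounded_norm.eventually_iff.1 <|
    p.eventually_mul_norm_add_lt_norm_eval hd (ε⁻¹ * (‖α‖ + ‖β‖)) (ε⁻¹ * ‖δ‖)
  refine ⟨max 1 (Y / ε), le_max_left _ _, fun R hR x y hmax hsec => ?_⟩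
  have hy : Y ≤ ‖y‖ :=
    calc Y = ε * (Y / ε) := by field_simp
      _ ≤ ε * R := mul_le_mul_of_nonneg_left (le_of_max_le_right hR) hε0.le
      _ ≤ ‖y‖ := mul_le_norm_of_le_max_norm hε0.le hε1.le hmax hsec
  have hx : ‖α‖ * ‖x‖ ≤ ‖α‖ * (ε⁻¹ * ‖y‖) :=
    mul_le_mul_of_nonneg_left ((le_inv_mul_iff₀ hε0).2 hsec) (norm_nonneg α)
  calc ε⁻¹ * ‖β * y + δ‖ ≤ ε⁻¹ * (‖β‖ * ‖y‖ + ‖δ‖) := by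
        gcongr; simpa only [norm_mul] using norm_add_le (β * y) δ
    _ = ε⁻¹ * (‖α‖ + ‖β‖) * ‖y‖ + ε⁻¹ * ‖δ‖ - ‖α‖ * (ε⁻¹ * ‖y‖) := by ring
    _ < ‖p.eval y‖ - ‖α‖ * ‖x‖ := by linarith [hY hy]
    _ ≤ ‖α * x + p.eval y‖ := by
        simpa [add_comm] using norm_sub_norm_le (p.eval y) (-(α * x))

/-- Filtration property: an elementary map `e(x,y) = (αx + p(y), βy + δ)` with
`αβ ≠ 0` and `deg p ≥ 2` pushes the sector `V⁺_{R,ε} = {‖(x,y)‖ ≥ R, |y| ≥ ε|x|}`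
into the complementary sector `V⁻ = {(u,v) : |u| > ε⁻¹ |v|}`, for all `R` larger
than some `R₀ ≥ 1`.  Here `‖(x,y)‖ = max (|x|, |y|)`. -/
theorem elementary_maps_sector_into_complement (α β δ : ℂ) (hαβ : α * β ≠ 0)
    (p : Polynomial ℂ) (hd : 2 ≤ p.natDegree) (ε : ℝ) (hε0 : 0 < ε) (hε1 : ε < 1) :
    ∃ R₀ ≥ (1 : ℝ), ∀ R ≥ R₀, ∀ x y : ℂ,
      R ≤ max ‖x‖ ‖y‖ →
      ε * ‖x‖ ≤ ‖y‖ →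
      ε⁻¹ * ‖β * y + δ‖ < ‖α * x + p.eval y‖ :=
  elementary_maps_sector_into_complement_general α β δ p hd ε hε0 hε1
end

section
/- Let f be a polynomial automorphism of ℂ² that is a product h_k ⋯ h_1 where each h_i = a_i ∘ e_i with a_i affine not fixing the point I = [1:0:0] ∈ ℙ² (viewing a_i as an automorphism of ℙ² preserving the line at infinity) and e_i elementary of degree d_i ≥ 2. Then deg(f) = d_k ⋯ d_1. -/
/-!
Write `d = deg p` and `D = deg g₁`. If `deg g₀ ≤ D` and `D ≥ 1`, then
`e ∘ g = (α g₀ + p(g₁), β g₁ + δ)` has first component of degree `dD`, dominated by `p(g₁)`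
because `d ≥ 2`, and second component of degree `≤ D < dD`. An affine map with `A₂ ≠ 0`
(one with `a(I) ≠ I`) carries this top degree into the second component of `a ∘ e ∘ g`, so the
inequality `deg g₀ ≤ deg g₁` persists along the composition while `deg g₁` is multiplied by `d`
at each step: no cancellation ever occurs.
-/

open MvPolynomial

/-- A polynomial self-map of `ℂ²`, given by its pair of component polynomials. -/
abbrev PolyMap := Fin 2 → MvPolynomial (Fin 2) ℂ

/-- Composition of polynomial self-maps of `ℂ²` (substitution of components). -/
noncomputable def PolyMap.comp (g f : PolyMap) : PolyMap :=
  fun i => MvPolynomial.aeval f (g i)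

/-- The degree of a polynomial self-map `f = (f₁, f₂)` of `ℂ²`: `max (deg f₁) (deg f₂)`. -/
noncomputable def PolyMap.deg (f : PolyMap) : ℕ :=
  max (f 0).totalDegree (f 1).totalDegree


namespace MvPolynomial

variable {R σ : Type*} [CommSemiring R]

theorem totalDegree_C_mul_le (a : R) (q : MvPolynomial σ R) :
    (C a * q).totalDegree ≤ q.totalDegree := by
  rw [C_mul']
  exact totalDegree_smul_le a q

theorem totalDegree_C_mul_add_le {a : R} {q r : MvPolynomial σ R}
    (hr : r.totalDegree ≤ q.totalDegree) : (C a * q + r).totalDegree ≤ q.totalDegree :=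
  (totalDegree_add _ _).trans (max_le (totalDegree_C_mul_le a q) hr)

theorem totalDegree_aeval_le (q : MvPolynomial σ R) (P : Polynomial R) :
    (Polynomial.aeval q P).totalDegree ≤ P.natDegree * q.totalDegree := by
  rw [Polynomial.aeval_eq_sum_range]
  refine totalDegree_finsetSum_le fun i hi => ?_
  calc (P.coeff i • q ^ i).totalDegree ≤ (q ^ i).totalDegree := totalDegree_smul_le _ _
    _ ≤ i * q.totalDegree := totalDegree_pow q i
    _ ≤ P.natDegree * q.totalDegree :=
      Nat.mul_le_mul_right _ (Nat.lt_succ_iff.mp (Finset.mem_range.mp hi))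

variable [NoZeroDivisors R]

theorem totalDegree_C_mul_of_ne_zero {a : R} (ha : a ≠ 0) (q : MvPolynomial σ R) :
    (C a * q).totalDegree = q.totalDegree := by
  rcases eq_or_ne q 0 with rfl | hq
  · simp
  · rw [totalDegree_mul_of_isDomain (C_ne_zero.mpr ha) hq, totalDegree_C, zero_add]

theorem totalDegree_C_mul_add_of_lt {a : R} (ha : a ≠ 0) {q r : MvPolynomial σ R}
    (hr : r.totalDegree < q.totalDegree) : (C a * q + r).totalDegree = q.totalDegree := by
  rw [totalDegree_add_eq_left_of_totalDegree_lt, totalDegree_C_mul_of_ne_zero ha]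
  rwa [totalDegree_C_mul_of_ne_zero ha]

theorem totalDegree_pow_of_ne_zero {q : MvPolynomial σ R} (hq : q ≠ 0) (n : ℕ) :
    (q ^ n).totalDegree = n * q.totalDegree := by
  induction n with
  | zero => simp
  | succ n ih =>
    rw [pow_succ, totalDegree_mul_of_isDomain (pow_ne_zero n hq) hq, ih, Nat.succ_mul]

theorem totalDegree_aeval (q : MvPolynomial σ R) (P : Polynomial R) :
    (Polynomial.aeval q P).totalDegree = P.natDegree * q.totalDegree := by
  refine le_antisymm (totalDegree_aeval_le q P) ?_
  rcases Nat.eq_zero_or_pos (P.natDegree * q.totalDegree) with h | h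
  · simp [h]
  have hq : q ≠ 0 := by rintro rfl; simp at h
  have hP : P.leadingCoeff ≠ 0 := by
    rw [Ne, Polynomial.leadingCoeff_eq_zero]; rintro rfl; simp at h
  have hlead : (Polynomial.aeval q
      (Polynomial.C P.leadingCoeff * Polynomial.X ^ P.natDegree)).totalDegree =
        P.natDegree * q.totalDegree := by
    rw [map_mul, map_pow, Polynomial.aeval_C, Polynomial.aeval_X, algebraMap_eq,
      totalDegree_C_mul_of_ne_zero hP, totalDegree_pow_of_ne_zero hq]
  have htail : (Polynomial.aeval q P.eraseLead).totalDegree < P.natDegree * q.totalDegree :=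
    calc _ ≤ P.eraseLead.natDegree * q.totalDegree := totalDegree_aeval_le q _
      _ ≤ (P.natDegree - 1) * q.totalDegree := Nat.mul_le_mul_right _ P.eraseLead_natDegree_le
      _ < P.natDegree * q.totalDegree :=
        Nat.mul_lt_mul_of_pos_right (Nat.sub_lt (Nat.pos_of_mul_pos_right h) one_pos)
          (Nat.pos_of_mul_pos_left h)
  have hsplit : Polynomial.aeval q P = Polynomial.aeval q P.eraseLead +
      Polynomial.aeval q (Polynomial.C P.leadingCoeff * Polynomial.X ^ P.natDegree) := by
    rw [← map_add, P.eraseLead_add_C_mul_X_pow]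
  rw [hsplit, totalDegree_add_eq_right_of_totalDegree_lt (htail.trans_eq hlead.symm), hlead]

end MvPolynomial

namespace PolyMap

theorem comp_assoc (a b c : PolyMap) : (a.comp b).comp c = a.comp (b.comp c) := by
  funext j
  exact comp_aeval_apply b (aeval c) (a j)

noncomputable def affine (A₁ B₁ C₁ A₂ B₂ C₂ : ℂ) : PolyMap :=
  ![C A₁ * X 0 + C B₁ * X 1 + C C₁, C A₂ * X 0 + C B₂ * X 1 + C C₂]

noncomputable def elementary (α β δ : ℂ) (p : Polynomial ℂ) : PolyMap :=
  ![C α * X 0 + Polynomial.aeval (X 1 : MvPolynomial (Fin 2) ℂ) p, C β * X 1 + C δ]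

section

variable (A₁ B₁ C₁ A₂ B₂ C₂ α β δ : ℂ) (p : Polynomial ℂ) (g : PolyMap)

theorem affine_comp_zero :
    (affine A₁ B₁ C₁ A₂ B₂ C₂).comp g 0 = C A₁ * g 0 + (C B₁ * g 1 + C C₁) := by
  simp [affine, PolyMap.comp, add_assoc]

theorem affine_comp_one :
    (affine A₁ B₁ C₁ A₂ B₂ C₂).comp g 1 = C A₂ * g 0 + (C B₂ * g 1 + C C₂) := by
  simp [affine, PolyMap.comp, add_assoc]

theorem elementary_comp_zero :
    (elementary α β δ p).comp g 0 = C α * g 0 + Polynomial.aeval (g 1) p := by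
  simp [elementary, PolyMap.comp, ← Polynomial.aeval_algHom_apply]

theorem elementary_comp_one : (elementary α β δ p).comp g 1 = C β * g 1 + C δ := by
  simp [elementary, PolyMap.comp]

theorem totalDegree_affine_comp_zero_le {m : PolyMap}
    (hm : (m 1).totalDegree ≤ (m 0).totalDegree) :
    ((affine A₁ B₁ C₁ A₂ B₂ C₂).comp m 0).totalDegree ≤ (m 0).totalDegree := by
  rw [affine_comp_zero]
  exact totalDegree_C_mul_add_le ((totalDegree_C_mul_add_le (by simp)).trans hm)

theorem totalDegree_affine_comp_one {m : PolyMap} (hA₂ : A₂ ≠ 0)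
    (hm : (m 1).totalDegree < (m 0).totalDegree) :
    ((affine A₁ B₁ C₁ A₂ B₂ C₂).comp m 1).totalDegree = (m 0).totalDegree := by
  rw [affine_comp_one]
  exact totalDegree_C_mul_add_of_lt hA₂ ((totalDegree_C_mul_add_le (by simp)).trans_lt hm)

variable {g}

theorem totalDegree_elementary_comp_zero (hp : 2 ≤ p.natDegree)
    (hg : (g 0).totalDegree ≤ (g 1).totalDegree) (hg1 : 1 ≤ (g 1).totalDegree) :
    ((elementary α β δ p).comp g 0).totalDegree = p.natDegree * (g 1).totalDegree := by
  have hlow : (C α * g 0).totalDegree < p.natDegree * (g 1).totalDegree :=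
    ((totalDegree_C_mul_le α _).trans hg).trans_lt (lt_mul_of_one_lt_left hg1 hp)
  rw [elementary_comp_zero, totalDegree_add_eq_right_of_totalDegree_lt, totalDegree_aeval]
  rwa [totalDegree_aeval]

theorem totalDegree_elementary_comp_one_le :
    ((elementary α β δ p).comp g 1).totalDegree ≤ (g 1).totalDegree := by
  rw [elementary_comp_one]
  exact totalDegree_C_mul_add_le (by simp)

theorem totalDegree_affine_elementary_comp (hA₂ : A₂ ≠ 0) (hp : 2 ≤ p.natDegree)
    (hg : (g 0).totalDegree ≤ (g 1).totalDegree) (hg1 : 1 ≤ (g 1).totalDegree) :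
    (((affine A₁ B₁ C₁ A₂ B₂ C₂).comp (elementary α β δ p)).comp g 0).totalDegree ≤
        (((affine A₁ B₁ C₁ A₂ B₂ C₂).comp (elementary α β δ p)).comp g 1).totalDegree ∧
      (((affine A₁ B₁ C₁ A₂ B₂ C₂).comp (elementary α β δ p)).comp g 1).totalDegree =
        p.natDegree * (g 1).totalDegree := by
  have hm0 := totalDegree_elementary_comp_zero α β δ p hp hg hg1
  have hm : ((elementary α β δ p).comp g 1).totalDegree <
      ((elementary α β δ p).comp g 0).totalDegree := by
    rw [hm0]
    exact (totalDegree_elementary_comp_one_le α β δ p).trans_lt (lt_mul_of_one_lt_left hg1 hp)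
  rw [comp_assoc, totalDegree_affine_comp_one A₁ B₁ C₁ A₂ B₂ C₂ hA₂ hm, hm0]
  exact ⟨hm0 ▸ totalDegree_affine_comp_zero_le A₁ B₁ C₁ A₂ B₂ C₂ hm.le, rfl⟩

end

theorem foldr_comp_totalDegree {k : ℕ} (h : Fin k → PolyMap) (d : Fin k → ℕ)
    (hd : ∀ i, 1 ≤ d i)
    (hstep : ∀ i (g : PolyMap),
      (g 0).totalDegree ≤ (g 1).totalDegree → 1 ≤ (g 1).totalDegree →
      ((h i).comp g 0).totalDegree ≤ ((h i).comp g 1).totalDegree ∧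
        ((h i).comp g 1).totalDegree = d i * (g 1).totalDegree) :
    (((List.ofFn h).foldr comp (fun i => X i)) 0).totalDegree ≤
        (((List.ofFn h).foldr comp (fun i => X i)) 1).totalDegree ∧
      (((List.ofFn h).foldr comp (fun i => X i)) 1).totalDegree = ∏ i, d i := by
  induction k with
  | zero => simp
  | succ k ih =>
    obtain ⟨hle, heq⟩ := ih (fun i => h i.succ) (fun i => d i.succ) (fun i => hd i.succ)
      (fun i => hstep i.succ)
    have hpos : 1 ≤ (((List.ofFn fun i => h i.succ).foldr comp (fun i => X i)) 1).totalDegree :=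
      heq ▸ Finset.one_le_prod' fun i _ => hd i.succ
    rw [List.ofFn_succ, List.foldr_cons, Fin.prod_univ_succ, ← heq]
    exact hstep 0 _ hle hpos

end PolyMap

/-- `hI` encodes `a_i(I) ≠ I`, since `a_i(I) = [A₁ : A₂ : 0]`. -/
theorem deg_comp_affine_elementary_general (k : ℕ)
    (A₁ B₁ C₁ A₂ B₂ C₂ : Fin k → ℂ)
    (hI : ∀ i, A₂ i ≠ 0)
    (α β δ : Fin k → ℂ)
    (p : Fin k → Polynomial ℂ) (hp : ∀ i, 2 ≤ (p i).natDegree)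
    (aff : Fin k → PolyMap)
    (haff : ∀ i, aff i =
      ![C (A₁ i) * X 0 + C (B₁ i) * X 1 + C (C₁ i),
        C (A₂ i) * X 0 + C (B₂ i) * X 1 + C (C₂ i)])
    (elem : Fin k → PolyMap)
    (helem : ∀ i, elem i =
      ![C (α i) * X 0 + Polynomial.aeval (X 1 : MvPolynomial (Fin 2) ℂ) (p i),
        C (β i) * X 1 + C (δ i)])
    (h : Fin k → PolyMap) (hh : ∀ i, h i = (aff i).comp (elem i))
    (f : PolyMap)
    (hf : f = (List.ofFn h).foldr PolyMap.comp (fun i => X i)) :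
    f.deg = ∏ i, (p i).natDegree := by
  obtain ⟨hle, heq⟩ := PolyMap.foldr_comp_totalDegree h (fun i => (p i).natDegree)
    (fun i => one_le_two.trans (hp i)) fun i g hg hg1 => by
      rw [hh i, haff i, helem i]
      exact PolyMap.totalDegree_affine_elementary_comp _ _ _ _ _ _ _ _ _ _ (hI i) (hp i) hg hg1
  rw [hf, PolyMap.deg, max_eq_right hle, heq]

/-- Algebraic stability for products of affine-elementary pairs: if
`f = h_k ∘ ⋯ ∘ h_1` where `h_i = a_i ∘ e_i`, with `a_i(x,y) = (A₁x + B₁y + C₁, A₂x + B₂y + C₂)`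
an invertible affine map whose extension to `ℙ²` does not fix `I = [1:0:0]`
(equivalently `A₂ ≠ 0`, since `a_i(I) = [A₁ : A₂ : 0]`), and
`e_i(x,y) = (α x + p_i(y), β y + δ)` elementary with `αβ ≠ 0` of degree
`d_i = deg p_i ≥ 2`, then `deg f = d_k ⋯ d_1`. -/
theorem deg_comp_affine_elementary (k : ℕ)
    (A₁ B₁ C₁ A₂ B₂ C₂ : Fin k → ℂ)
    (hdet : ∀ i, A₁ i * B₂ i - A₂ i * B₁ i ≠ 0)
    (hI : ∀ i, A₂ i ≠ 0)
    (α β δ : Fin k → ℂ) (hαβ : ∀ i, α i * β i ≠ 0)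
    (p : Fin k → Polynomial ℂ) (hp : ∀ i, 2 ≤ (p i).natDegree)
    (aff : Fin k → PolyMap)
    (haff : ∀ i, aff i =
      ![C (A₁ i) * X 0 + C (B₁ i) * X 1 + C (C₁ i),
        C (A₂ i) * X 0 + C (B₂ i) * X 1 + C (C₂ i)])
    (elem : Fin k → PolyMap)
    (helem : ∀ i, elem i =
      ![C (α i) * X 0 + Polynomial.aeval (X 1 : MvPolynomial (Fin 2) ℂ) (p i),
        C (β i) * X 1 + C (δ i)])
    (h : Fin k → PolyMap) (hh : ∀ i, h i = (aff i).comp (elem i))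
    (f : PolyMap)
    (hf : f = (List.ofFn h).foldr PolyMap.comp (fun i => X i)) :
    f.deg = ∏ i, (p i).natDegree :=
  deg_comp_affine_elementary_general k A₁ B₁ C₁ A₂ B₂ C₂ hI α β δ p hp aff haff elem helem h hh f hf
end
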